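/- A consensus function f on the n-cube Q_n satisfies the Translation property (T), the Consistency property (C), and the condition ⋂_{x ∈ X} f(x) ≠ ∅ (where f(x) denotes the value of f on the profile of length one consisting of the single vertex x) if and only if f is the constant function f₂ with f₂(π) = X for all profiles π. -/

import Mathlib

/-- A vertex of the n-cube `Q_n`: an element of `{0,1}^n`. -/
abbrev Vertex (n : ℕ) := Fin n → Bool

/-- Coordinatewise addition modulo 2 (`u ⊕ v`). -/
def vxor {n : ℕ} (u v : Vertex n) : Vertex n := fun i => xor (u i) (v i)

/-- A profile: a nonempty finite sequence of vertices of `Q_n`. -/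
def Profile (n : ℕ) := { l : List (Vertex n) // l ≠ [] }

/-- Translation of a profile: `π ⊕ v = (x₁ ⊕ v, …, x_k ⊕ v)`. -/
def pxor {n : ℕ} (π : Profile n) (v : Vertex n) : Profile n :=
  ⟨π.1.map (fun x => vxor x v), by simpa using π.2⟩

/-- The Translation property (T) for a consensus function. -/
def Translation {n : ℕ} (f : Profile n → Set (Vertex n)) : Prop :=
  ∀ (π : Profile n) (u v : Vertex n), u ∈ f π → vxor u v ∈ f (pxor π v)

/-- Hamming distance on the n-cube. -/
def cubeDist {n : ℕ} (u v : Vertex n) : ℕ := hammingDist u v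

/-- The all-zeros vertex `𝟎`. -/
def zeroV (n : ℕ) : Vertex n := fun _ => false

/-- `‖u‖ = d(𝟎,u)`, the number of ones in `u`. -/
def vnorm {n : ℕ} (u : Vertex n) : ℕ := cubeDist (zeroV n) u

/-- `‖π‖ = max{‖x₁‖,…,‖x_k‖}`. -/
def pnorm {n : ℕ} (π : Profile n) : ℕ := (π.1.map vnorm).foldr max 0

/-- Eccentricity `e(x, π) = max_j d(x, x_j)`. -/
def ecc {n : ℕ} (π : Profile n) (x : Vertex n) : ℕ :=
  (π.1.map (fun y => cubeDist x y)).foldr max 0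

/-- The center function. -/
def Cen {n : ℕ} (π : Profile n) : Set (Vertex n) :=
  {x | ∀ y : Vertex n, ecc π x ≤ ecc π y}

/-- Status `S_π(x) = Σ_j d(x, x_j)`. -/
def status {n : ℕ} (π : Profile n) (x : Vertex n) : ℕ :=
  (π.1.map (fun y => cubeDist x y)).sum

/-- The median function. -/
def Med {n : ℕ} (π : Profile n) : Set (Vertex n) :=
  {x | ∀ y : Vertex n, status π x ≤ status π y}

/-- The anti-median function. -/
def AM {n : ℕ} (π : Profile n) : Set (Vertex n) :=
  {x | ∀ y : Vertex n, status π y ≤ status π x}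

/-- `Σ_{j=1}^k xᵢ^j`: the number of profile entries with a 1 in coordinate `i`. -/
def cnt {n : ℕ} (π : Profile n) (i : Fin n) : ℕ :=
  (π.1.map (fun x => if x i then 1 else 0)).sum

/-- The majority vertex `Maj(π)`: `wᵢ = 1` iff `Σ_j xᵢ^j > k/2`. -/
def Maj {n : ℕ} (π : Profile n) : Vertex n :=
  fun i => decide (π.1.length < 2 * cnt π i)

/-- The minority vertex `Min(π)`: `mᵢ = 1` iff `Σ_j xᵢ^j < k/2`. -/
def MinV {n : ℕ} (π : Profile n) : Vertex n :=
  fun i => decide (2 * cnt π i < π.1.length)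

/-- The Condorcet score `Cs(π)`. -/
def Cs {n : ℕ} (π : Profile n) : ℕ :=
  (Finset.univ.filter (fun i : Fin n => 2 * cnt π i = π.1.length)).card

/-- The Majority property (Maj). -/
def MajProp {n : ℕ} (f : Profile n → Set (Vertex n)) : Prop :=
  ∀ π : Profile n, Maj π ∈ f π

/-- The Minority property (Min). -/
def MinProp {n : ℕ} (f : Profile n → Set (Vertex n)) : Prop :=
  ∀ π : Profile n, MinV π ∈ f π

/-- The Restricted Range property (RR): `|f(π)| ≤ 2^{Cs(π)}`. -/
def RestrictedRange {n : ℕ} (f : Profile n → Set (Vertex n)) : Prop :=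
  ∀ π : Profile n, (f π).ncard ≤ 2 ^ Cs π

/-- The `ℓ_p` status `ℓ_pS_π(x) = Σ_j d(x,x_j)^p`. -/
noncomputable def lpStatus {n : ℕ} (p : ℝ) (π : Profile n) (x : Vertex n) : ℝ :=
  (π.1.map (fun y => (cubeDist x y : ℝ) ^ p)).sum

/-- The `ℓ_p`-function. -/
noncomputable def lpFun {n : ℕ} (p : ℝ) (π : Profile n) : Set (Vertex n) :=
  {x | ∀ y : Vertex n, lpStatus p π x ≤ lpStatus p π y}

/-- The `p`-Characteristic `Char_p(π) = Σ_j ‖x_j‖^p`. -/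
noncomputable def Charp {n : ℕ} (p : ℝ) (π : Profile n) : ℝ :=
  (π.1.map (fun x => (vnorm x : ℝ) ^ p)).sum

/-- Concatenation of profiles `π₁π₂`. -/
def pconcat {n : ℕ} (π₁ π₂ : Profile n) : Profile n :=
  ⟨π₁.1 ++ π₂.1, by simp [π₁.2]⟩

/-- The profile of length one consisting of the single vertex `x`. -/
def singleP {n : ℕ} (x : Vertex n) : Profile n := ⟨[x], by simp⟩

/-- The Consistency property (C). -/
def Consistency {n : ℕ} (f : Profile n → Set (Vertex n)) : Prop :=
  ∀ π₁ π₂ : Profile n, (f π₁ ∩ f π₂).Nonempty → f (pconcat π₁ π₂) = f π₁ ∩ f π₂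

/-! If `w` lies in every `f(x)`, translating the one-vertex profile `(y ⊕ w ⊕ u)` by `w ⊕ u`
moves `w` to `u` and the profile to `(y)`, so `f(y) = X` for every `y`. Consistency then extends
this to every profile by splitting `(x₁,…,x_k)` as `(x₁)(x₂,…,x_k)`, since `X ∩ X ≠ ∅`. -/

@[simp]
theorem vxor_vxor_cancel_left {n : ℕ} (u v : Vertex n) : vxor u (vxor u v) = v := by
  funext i
  simp [vxor]

@[simp]
theorem vxor_vxor_cancel_right {n : ℕ} (u v : Vertex n) : vxor (vxor u v) v = u := by
  funext i
  simp [vxor]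

theorem pxor_singleP {n : ℕ} (x v : Vertex n) : pxor (singleP x) v = singleP (vxor x v) := rfl

theorem Translation.singleP_eq_univ {n : ℕ} {f : Profile n → Set (Vertex n)}
    (hT : Translation f) {w : Vertex n} (hw : ∀ x, w ∈ f (singleP x)) (y : Vertex n) :
    f (singleP y) = Set.univ := by
  refine Set.eq_univ_of_forall fun u => ?_
  have h := hT (singleP (vxor y (vxor w u))) w (vxor w u) (hw _)
  rwa [pxor_singleP, vxor_vxor_cancel_left, vxor_vxor_cancel_right] at h

theorem Consistency.eq_univ_of_singleP_eq_univ {n : ℕ} {f : Profile n → Set (Vertex n)}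
    (hC : Consistency f) (h1 : ∀ y, f (singleP y) = Set.univ) (π : Profile n) :
    f π = Set.univ := by
  obtain ⟨l, hl⟩ := π
  induction l with
  | nil => exact absurd rfl hl
  | cons x rest ih =>
    rcases rest with _ | ⟨y, t⟩
    · exact h1 x
    · have hrest : y :: t ≠ [] := List.cons_ne_nil y t
      have hsplit : (⟨x :: y :: t, hl⟩ : Profile n) = pconcat (singleP x) ⟨y :: t, hrest⟩ := rfl
      have hne : (f (singleP x) ∩ f ⟨y :: t, hrest⟩).Nonempty := by
        rw [h1 x, ih hrest, Set.univ_inter]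
        exact Set.univ_nonempty
      rw [hsplit, hC _ _ hne, h1 x, ih hrest, Set.univ_inter]

theorem translation_const_univ (n : ℕ) : Translation fun _ : Profile n => Set.univ :=
  fun _ _ _ _ => Set.mem_univ _

theorem consistency_const {n : ℕ} (S : Set (Vertex n)) : Consistency fun _ : Profile n => S :=
  fun _ _ _ => (Set.inter_self S).symm

theorem stmt11_general {n : ℕ} (f : Profile n → Set (Vertex n)) :
    (Translation f ∧ Consistency f ∧ (⋂ x : Vertex n, f (singleP x)) ≠ ∅) ↔
      f = fun _ => (Set.univ : Set (Vertex n)) := by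
  constructor
  · rintro ⟨hT, hC, hI⟩
    obtain ⟨w, hw⟩ := Set.nonempty_iff_ne_empty.mpr hI
    rw [Set.mem_iInter] at hw
    exact funext (hC.eq_univ_of_singleP_eq_univ (hT.singleP_eq_univ hw))
  · rintro rfl
    refine ⟨translation_const_univ n, consistency_const _, ?_⟩
    rw [Set.iInter_const]
    exact Set.univ_nonempty.ne_empty

/-- A consensus function `f` on `Q_n` satisfies (T), (C) and `⋂_{x ∈ X} f(x) ≠ ∅`
iff `f` is the constant function `f₂` with `f₂(π) = X` for all profiles `π`. -/
theorem stmt11 {n : ℕ} (f : Profile n → Set (Vertex n))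
    (hf : ∀ π : Profile n, (f π).Nonempty) :
    (Translation f ∧ Consistency f ∧ (⋂ x : Vertex n, f (singleP x)) ≠ ∅) ↔
      f = fun _ => (Set.univ : Set (Vertex n)) :=
  stmt11_general f
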